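/- Let A_n = n⁻² Σ_{j=1}^{Q_n} (n−j+1) X_{j,n} and β*_n(ℓ) = −n^{−1/2} Σ_{j=1}^{n} (F_n(X_j) − F(X_j)) ℓ(X_j). Then √n(A_n − ∫ h dF) − 𝔾_n(h) − β*_n(ℓ) → 0 in probability as n → ∞. -/

import Mathlib

open MeasureTheory ProbabilityTheory Filter Set

/-- The sorted list of the sample `X 0, ..., X (n-1)` (order statistics). -/
noncomputable def sortedSample {Ω : Type*} (X : ℕ → Ω → ℝ) (n : ℕ) (ω : Ω) : List ℝ :=
  Multiset.sort ((Finset.range n).val.map (fun i => X i ω)) (· ≤ ·)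

/-- Number of poor individuals: `Q_n = #{i ≤ n : X_i ≤ Z}`. -/
noncomputable def povertyCount {Ω : Type*} (X : ℕ → Ω → ℝ) (Z : ℝ) (n : ℕ) (ω : Ω) : ℕ :=
  ((Finset.range n).filter (fun i => X i ω ≤ Z)).card

/-- Takayama's statistic
`T_n = 1 + 1/n − (2/(μ_n n²)) Σ_{j=1}^{Q_n} (n−j+1) X_{j,n}`. -/
noncomputable def takayamaStat {Ω : Type*} (X : ℕ → Ω → ℝ) (Z : ℝ) (n : ℕ) (ω : Ω) : ℝ :=
  1 + 1 / (n : ℝ) -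
    (2 / (((∑ i ∈ Finset.range n, X i ω) / n) * (n : ℝ) ^ 2)) *
      ∑ j ∈ Finset.range (povertyCount X Z n ω),
        ((n : ℝ) - j) * (sortedSample X n ω).getD j 0

/-- Empirical distribution function `F_n(x) = n⁻¹ #{i ≤ n : X_i ≤ x}`. -/
noncomputable def empCdf {Ω : Type*} (X : ℕ → Ω → ℝ) (n : ℕ) (ω : Ω) (x : ℝ) : ℝ :=
  ((Finset.range n).filter (fun i => X i ω ≤ x)).card / n

/-- Functional empirical process `𝔾_n(f) = n^{−1/2} Σ_{i=1}^n (f(X_i) − E f(X₁))`. -/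
noncomputable def fep {Ω : Type*} [MeasureSpace Ω] (X : ℕ → Ω → ℝ) (n : ℕ) (f : ℝ → ℝ)
    (ω : Ω) : ℝ :=
  (∑ i ∈ Finset.range n, (f (X i ω) - ∫ ω', f (X 0 ω'))) / Real.sqrt n

/-- Generalized inverse (quantile function) `F⁻¹(s) = inf {x : F(x) ≥ s}`. -/
noncomputable def Finv (F : ℝ → ℝ) (s : ℝ) : ℝ := sInf {x | s ≤ F x}

/-- `h(x) = x (1 − F(x)) 1_{(x ≤ Z)}`. -/
noncomputable def hFun (F : ℝ → ℝ) (Z x : ℝ) : ℝ := if x ≤ Z then x * (1 - F x) else 0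

/-- `ℓ(x) = x 1_{(x ≤ Z)}`. -/
noncomputable def ellFun (Z x : ℝ) : ℝ := if x ≤ Z then x else 0

/-- `g(x) = 2 (μ⁻² (∫ h dF) x − μ⁻¹ h(x))`. -/
noncomputable def gFun (F : ℝ → ℝ) (Z μ EH x : ℝ) : ℝ :=
  2 * (EH / μ ^ 2 * x - hFun F Z x / μ)

/-- `q(x) = −(2/μ) ℓ(x)`. -/
noncomputable def qFun (Z μ x : ℝ) : ℝ := -(2 / μ) * ellFun Z x

/-- Residual empirical process
`β*_n(f) = −n^{−1/2} Σ_{j=1}^n (F_n(X_j) − F(X_j)) f(X_j)`. -/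
noncomputable def residProc {Ω : Type*} (X : ℕ → Ω → ℝ) (F : ℝ → ℝ) (n : ℕ) (f : ℝ → ℝ)
    (ω : Ω) : ℝ :=
  -(∑ j ∈ Finset.range n, (empCdf X n ω (X j ω) - F (X j ω)) * f (X j ω)) / Real.sqrt n

/-! Almost surely the sample has no ties, because the `Xᵢ` are independent with a continuous
distribution function. Without ties the `j`-th order statistic has exactly `j` sample points
below or at it, so `n F_n(Xᵢ)` is the rank of `Xᵢ` and
`A_n = n⁻² Σᵢ (n + 1 − n F_n(Xᵢ)) ℓ(Xᵢ)`. Substituting this, the remainder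
`√n (A_n − ∫ h dF) − 𝔾_n(h) − β*_n(ℓ)` is exactly `n^{-3/2} Σᵢ ℓ(Xᵢ)`, which for nonnegative
`Xᵢ` lies in `[0, |Z|/√n]`. -/

open scoped Topology

namespace List

variable {α : Type*}

theorem countP_eq_of_take_of_drop (L : List α) (p : α → Bool) {i : ℕ} (hi : i ≤ L.length)
    (htake : ∀ a ∈ L.take i, p a) (hdrop : ∀ a ∈ L.drop i, ¬ p a) : L.countP p = i := by
  rw [← take_append_drop i L, countP_append, countP_eq_length.2 htake, countP_eq_zero.2 hdrop,
    length_take, min_eq_left hi, add_zero]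

theorem sum_range_length_getD {M : Type*} [AddCommMonoid M] (L : List α) (d : α) (g : α → M) :
    ∑ j ∈ Finset.range L.length, g (L.getD j d) = (L.map g).sum := by
  rw [Finset.sum_range, ← Fin.sum_univ_fun_getElem]
  simp

variable [LinearOrder α] {L : List α}

theorem SortedLT.countP_lt_getElem (hL : L.SortedLT) {j : ℕ} (hj : j < L.length) :
    L.countP (· < L[j]) = j := by
  refine countP_eq_of_take_of_drop L _ hj.le ?_ ?_
  · rintro _ ha
    obtain ⟨i, hi, rfl⟩ := mem_take_iff_getElem.1 ha
    simpa [hL.getElem_lt_getElem_iff] using (lt_min_iff.1 hi).1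
  · rintro _ ha
    obtain ⟨i, hi, rfl⟩ := mem_drop_iff_getElem.1 ha
    simp [hL.getElem_le_getElem_iff]

theorem SortedLT.countP_le_getElem (hL : L.SortedLT) {j : ℕ} (hj : j < L.length) :
    L.countP (· ≤ L[j]) = j + 1 := by
  refine countP_eq_of_take_of_drop L _ hj ?_ ?_
  · rintro _ ha
    obtain ⟨i, hi, rfl⟩ := mem_take_iff_getElem.1 ha
    simpa [hL.getElem_le_getElem_iff, Nat.lt_succ_iff] using (lt_min_iff.1 hi).1
  · rintro _ ha
    obtain ⟨i, hi, rfl⟩ := mem_drop_iff_getElem.1 ha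
    simp [hL.getElem_lt_getElem_iff]
    omega

theorem SortedLT.getElem_le_iff_lt_countP (hL : L.SortedLT) {j : ℕ} (hj : j < L.length) (z : α) :
    L[j] ≤ z ↔ j < L.countP (· ≤ z) := by
  constructor
  · intro hz
    calc j < L.countP (· ≤ L[j]) := by rw [hL.countP_le_getElem hj]; omega
      _ ≤ L.countP (· ≤ z) := countP_mono_left fun x _ hx => by simp_all [le_trans _ hz]
  · intro hlt
    by_contra! hz
    have : L.countP (· ≤ z) ≤ L.countP (· < L[j]) :=
      countP_mono_left fun x _ hx => by simp_all [lt_of_le_of_lt _ hz]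
    rw [hL.countP_lt_getElem hj] at this
    omega

end List

section OrderStatistics

variable {Ω : Type*} (X : ℕ → Ω → ℝ) (n : ℕ) (ω : Ω)

theorem coe_sortedSample :
    (sortedSample X n ω : Multiset ℝ) = (Finset.range n).val.map (X · ω) :=
  Multiset.sort_eq _ _

theorem length_sortedSample : (sortedSample X n ω).length = n := by
  simp [sortedSample]

theorem sum_map_sortedSample {M : Type*} [AddCommMonoid M] (g : ℝ → M) :
    ((sortedSample X n ω).map g).sum = ∑ i ∈ Finset.range n, g (X i ω) := by
  rw [← Multiset.sum_coe, ← Multiset.map_coe, coe_sortedSample, Multiset.map_map]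
  rfl

theorem countP_le_sortedSample (v : ℝ) :
    (sortedSample X n ω).countP (· ≤ v) = ((Finset.range n).filter (X · ω ≤ v)).card := by
  rw [← Multiset.coe_countP, coe_sortedSample, Multiset.countP_map]
  rfl

variable {X n ω}

theorem sortedLT_sortedSample (hinj : InjOn (X · ω) (Finset.range n)) :
    (sortedSample X n ω).SortedLT := by
  have hLE : (sortedSample X n ω).SortedLE :=
    List.sortedLE_iff_pairwise.2 (Multiset.pairwise_sort _ _)
  refine hLE.sortedLT_of_nodup ?_
  rw [← Multiset.coe_nodup, coe_sortedSample]
  exact (Finset.range n).nodup.map_on fun i hi j hj h => hinj hi hj h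

end OrderStatistics

theorem sum_sortedSample_eq_sum_rank {Ω : Type*} {X : ℕ → Ω → ℝ} {n : ℕ} {ω : Ω} (Z : ℝ)
    (hinj : InjOn (X · ω) (Finset.range n)) :
    ∑ j ∈ Finset.range (povertyCount X Z n ω), ((n : ℝ) - j) * (sortedSample X n ω).getD j 0 =
      ∑ i ∈ Finset.range n,
        ((n : ℝ) + 1 - ((Finset.range n).filter (X · ω ≤ X i ω)).card) * ellFun Z (X i ω) := by
  set L := sortedSample X n ω
  have hL : L.SortedLT := sortedLT_sortedSample hinj
  have hlen : L.length = n := length_sortedSample X n ω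
  have hQ : povertyCount X Z n ω ≤ n := (Finset.card_filter_le _ _).trans_eq (Finset.card_range n)
  have hpoor : ∀ j < n, L.getD j 0 ≤ Z ↔ j < povertyCount X Z n ω := fun j hj => by
    rw [List.getD_eq_getElem _ _ (hlen ▸ hj), hL.getElem_le_iff_lt_countP, countP_le_sortedSample]
    rfl
  have hrank : ∀ j < n, ((Finset.range n).filter (X · ω ≤ L.getD j 0)).card = j + 1 :=
    fun j hj => by
      rw [← countP_le_sortedSample, List.getD_eq_getElem _ _ (hlen ▸ hj), hL.countP_le_getElem]
  have hperm := List.sum_range_length_getD L 0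
    fun v => ((n : ℝ) + 1 - ((Finset.range n).filter (X · ω ≤ v)).card) * ellFun Z v
  rw [hlen, sum_map_sortedSample] at hperm
  calc ∑ j ∈ Finset.range (povertyCount X Z n ω), ((n : ℝ) - j) * L.getD j 0
      = ∑ j ∈ Finset.range n, ((n : ℝ) - j) * ellFun Z (L.getD j 0) := by
        rw [← Finset.sum_range_add_sum_Ico _ hQ, Finset.sum_eq_zero (s := Finset.Ico _ n), add_zero]
        · refine Finset.sum_congr rfl fun j hj => ?_
          have hj := Finset.mem_range.1 hj
          rw [ellFun, if_pos ((hpoor j (hj.trans_le hQ)).2 hj)]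
        · intro j hj
          obtain ⟨hQj, hjn⟩ := Finset.mem_Ico.1 hj
          rw [ellFun, if_neg (fun h => (hpoor j hjn).1 h |>.not_ge hQj), mul_zero]
    _ = ∑ j ∈ Finset.range n, ((n : ℝ) + 1 - ((Finset.range n).filter (X · ω ≤ L.getD j 0)).card)
          * ellFun Z (L.getD j 0) := by
        refine Finset.sum_congr rfl fun j hj => ?_
        rw [hrank j (Finset.mem_range.1 hj)]
        push_cast
        ring
    _ = _ := hperm

theorem hFun_eq_ellFun_mul (F : ℝ → ℝ) (Z x : ℝ) : hFun F Z x = ellFun Z x * (1 - F x) := by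
  unfold hFun ellFun
  split_ifs <;> ring

theorem sqrt_mul_sub_fep_sub_residProc_eq {Ω : Type*} [MeasureSpace Ω] {X : ℕ → Ω → ℝ}
    (F : ℝ → ℝ) (Z : ℝ) {n : ℕ} {ω : Ω} (hn : n ≠ 0) (hinj : InjOn (X · ω) (Finset.range n)) :
    Real.sqrt n *
          ((∑ j ∈ Finset.range (povertyCount X Z n ω),
              ((n : ℝ) - j) * (sortedSample X n ω).getD j 0) / (n : ℝ) ^ 2 -
            ∫ ω', hFun F Z (X 0 ω')) -
        fep X n (hFun F Z) ω - residProc X F n (ellFun Z) ω =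
      (∑ i ∈ Finset.range n, ellFun Z (X i ω)) / (n * Real.sqrt n) := by
  have hn' : (n : ℝ) ≠ 0 := Nat.cast_ne_zero.2 hn
  have hsqrt : Real.sqrt n ^ 2 = n := Real.sq_sqrt (Nat.cast_nonneg n)
  have hsqrt0 : Real.sqrt n ≠ 0 := by positivity
  set E := ∫ ω', hFun F Z (X 0 ω')
  have hcentred : ∑ i ∈ Finset.range n, (hFun F Z (X i ω) - E) =
      ∑ i ∈ Finset.range n, hFun F Z (X i ω) - n * E := by
    rw [Finset.sum_sub_distrib, Finset.sum_const, Finset.card_range, nsmul_eq_mul]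
  have hcancel :
      ∑ i ∈ Finset.range n,
          ((n : ℝ) + 1 - ((Finset.range n).filter (X · ω ≤ X i ω)).card) * ellFun Z (X i ω) -
        n * ∑ i ∈ Finset.range n, hFun F Z (X i ω) +
        n * ∑ i ∈ Finset.range n, (empCdf X n ω (X i ω) - F (X i ω)) * ellFun Z (X i ω) =
      ∑ i ∈ Finset.range n, ellFun Z (X i ω) := by
    rw [Finset.mul_sum, Finset.mul_sum, ← Finset.sum_sub_distrib, ← Finset.sum_add_distrib]
    refine Finset.sum_congr rfl fun i _ => ?_
    rw [hFun_eq_ellFun_mul, empCdf]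
    field_simp
    ring
  rw [sum_sortedSample_eq_sum_rank Z hinj, fep, residProc, hcentred]
  field_simp
  linear_combination (n : ℝ) * hcancel + (∑ i ∈ Finset.range n,
    ((n : ℝ) + 1 - ((Finset.range n).filter (X · ω ≤ X i ω)).card) * ellFun Z (X i ω) -
      n ^ 2 * E) * hsqrt

theorem ellFun_nonneg_of_nonneg (Z : ℝ) {x : ℝ} (hx : 0 ≤ x) : 0 ≤ ellFun Z x := by
  unfold ellFun
  split_ifs <;> simp [hx]

theorem ellFun_le_abs (Z x : ℝ) : ellFun Z x ≤ |Z| := by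
  unfold ellFun
  split_ifs with h
  · exact h.trans (le_abs_self Z)
  · exact abs_nonneg Z

theorem abs_sum_ellFun_div_le {x : ℕ → ℝ} (hx : ∀ i, 0 ≤ x i) (Z : ℝ) {n : ℕ} (hn : n ≠ 0) :
    |(∑ i ∈ Finset.range n, ellFun Z (x i)) / (n * Real.sqrt n)| ≤ |Z| / Real.sqrt n := by
  have hn' : (0 : ℝ) < n := Nat.cast_pos.2 (Nat.pos_of_ne_zero hn)
  have hsum : ∑ i ∈ Finset.range n, ellFun Z (x i) ≤ n * |Z| := by
    simpa using Finset.sum_le_sum fun i (_ : i ∈ Finset.range n) => ellFun_le_abs Z (x i)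
  rw [abs_of_nonneg (div_nonneg (Finset.sum_nonneg fun i _ => ellFun_nonneg_of_nonneg Z (hx i))
    (by positivity))]
  calc (∑ i ∈ Finset.range n, ellFun Z (x i)) / (n * Real.sqrt n)
      ≤ n * |Z| / (n * Real.sqrt n) := by gcongr
    _ = |Z| / Real.sqrt n := mul_div_mul_left _ _ hn'.ne'

theorem measure_singleton_eq_zero_of_continuous_cdf (ν : Measure ℝ) [IsProbabilityMeasure ν]
    (h : Continuous (cdf ν)) (x : ℝ) : ν {x} = 0 := by
  rw [← measure_cdf ν, StieltjesFunction.measure_singleton,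
    ((monotone_cdf ν).continuousWithinAt_Iio_iff_leftLim_eq).1 h.continuousWithinAt, sub_self,
    ENNReal.ofReal_zero]

theorem ProbabilityTheory.IndepFun.measure_eq_eq_zero {Ω : Type*} [MeasurableSpace Ω]
    {μ : Measure Ω} [IsFiniteMeasure μ] {X Y : Ω → ℝ} (hXY : IndepFun X Y μ) (hX : Measurable X)
    (hY : Measurable Y) (hatom : ∀ y, μ.map Y {y} = 0) : μ {ω | X ω = Y ω} = 0 := by
  have hdiag : MeasurableSet {p : ℝ × ℝ | p.1 = p.2} := measurableSet_diagonal
  have hpre : ∀ x : ℝ, Prod.mk x ⁻¹' {p : ℝ × ℝ | p.1 = p.2} = {x} := fun x => by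
    ext y
    simp [eq_comm]
  have hmap := (indepFun_iff_map_prod_eq_prod_map_map hX.aemeasurable hY.aemeasurable).1 hXY
  calc μ {ω | X ω = Y ω} = μ.map (fun ω => (X ω, Y ω)) {p | p.1 = p.2} := by
        rw [Measure.map_apply (hX.prodMk hY) hdiag]
        rfl
    _ = ∫⁻ x, μ.map Y (Prod.mk x ⁻¹' {p | p.1 = p.2}) ∂(μ.map X) := by
        rw [hmap, Measure.prod_apply hdiag]
    _ = 0 := by simp [hpre, hatom]

theorem ae_injective_of_iIndepFun {Ω : Type*} [MeasurableSpace Ω] {μ : Measure Ω}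
    [IsFiniteMeasure μ] {X : ℕ → Ω → ℝ} (hMeas : ∀ i, Measurable (X i)) (hIndep : iIndepFun X μ)
    (hatom : ∀ i x, μ.map (X i) {x} = 0) :
    ∀ᵐ ω ∂μ, Function.Injective (X · ω) := by
  refine ae_all_iff.2 fun i => ae_all_iff.2 fun j => ?_
  rcases eq_or_ne i j with rfl | hij
  · exact ae_of_all _ fun _ _ => rfl
  exact measure_mono_null (fun ω hω => (Classical.not_imp.1 hω).1)
    ((hIndep.indepFun hij).measure_eq_eq_zero (hMeas i) (hMeas j) (hatom j))

theorem tendstoInMeasure_zero_of_ae_norm_le {ι α E : Type*} [MeasurableSpace α] {μ : Measure α}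
    [SeminormedAddCommGroup E] {l : Filter ι} {f : ι → α → E} {c : ι → ℝ}
    (hc : Tendsto c l (𝓝 0)) (hf : ∀ᶠ i in l, ∀ᵐ x ∂μ, ‖f i x‖ ≤ c i) :
    TendstoInMeasure μ f l 0 := by
  refine tendstoInMeasure_iff_norm.2 fun ε hε => tendsto_const_nhds.congr' ?_
  filter_upwards [hf, hc.eventually (gt_mem_nhds hε)] with i hfi hci
  refine (measure_mono_null (fun x hx => ?_) (ae_iff.1 hfi)).symm
  simp only [mem_ofPred_eq, Pi.zero_apply, sub_zero] at hx ⊢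
  linarith

theorem statement7_general
    {Ω : Type*} [MeasureSpace Ω] [IsProbabilityMeasure (ℙ : Measure Ω)]
    (X : ℕ → Ω → ℝ) (F : ℝ → ℝ) (Z : ℝ)
    (hMeas : ∀ i, Measurable (X i))
    (hIndep : iIndepFun X ℙ)
    (hIdent : ∀ i, IdentDistrib (X i) (X 0) ℙ ℙ)
    (hNonneg : ∀ i ω, 0 ≤ X i ω)
    (hF : ∀ x, F x = (ℙ {ω | X 0 ω ≤ x}).toReal)
    (hFcont : Continuous F) :
    TendstoInMeasure ℙ
      (fun (n : ℕ) (ω : Ω) =>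
        Real.sqrt (n : ℝ) *
            ((∑ j ∈ Finset.range (povertyCount X Z n ω),
                ((n : ℝ) - j) * (sortedSample X n ω).getD j 0) / (n : ℝ) ^ 2 -
              ∫ ω', hFun F Z (X 0 ω')) -
          fep X n (hFun F Z) ω - residProc X F n (ellFun Z) ω)
      atTop (fun _ => 0) := by
  have := Measure.isProbabilityMeasure_map (μ := ℙ) (hMeas 0).aemeasurable
  have hcdf : cdf (Measure.map (X 0) ℙ) = F := by
    ext x
    rw [cdf_eq_real, measureReal_def, Measure.map_apply (hMeas 0) measurableSet_Iic, hF]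
    rfl
  have hnoTies : ∀ᵐ ω ∂ℙ, Function.Injective (X · ω) :=
    ae_injective_of_iIndepFun hMeas hIndep fun i x => (hIdent i).map_eq ▸
      measure_singleton_eq_zero_of_continuous_cdf _ (hcdf ▸ hFcont) x
  have hbound : Tendsto (fun n : ℕ => |Z| / Real.sqrt n) atTop (𝓝 0) :=
    tendsto_const_nhds.div_atTop (Real.tendsto_sqrt_atTop.comp tendsto_natCast_atTop_atTop)
  refine tendstoInMeasure_zero_of_ae_norm_le hbound ?_
  filter_upwards [eventually_ne_atTop 0] with n hn
  filter_upwards [hnoTies] with ω hinj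
  rw [Real.norm_eq_abs, sqrt_mul_sub_fep_sub_residProc_eq F Z hn hinj.injOn]
  exact abs_sum_ellFun_div_le (hNonneg · ω) Z hn

/-- with `A_n = n⁻² Σ_{j=1}^{Q_n} (n−j+1) X_{j,n}`,
`√n (A_n − ∫ h dF) − 𝔾_n(h) − β*_n(ℓ) → 0` in probability. -/
theorem statement7
    {Ω : Type*} [MeasureSpace Ω] [IsProbabilityMeasure (ℙ : Measure Ω)]
    (X : ℕ → Ω → ℝ) (F : ℝ → ℝ) (Z : ℝ) (hZ : 0 < Z)
    (hMeas : ∀ i, Measurable (X i))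
    (hIndep : iIndepFun X ℙ)
    (hIdent : ∀ i, IdentDistrib (X i) (X 0) ℙ ℙ)
    (hNonneg : ∀ i ω, 0 ≤ X i ω)
    (hF : ∀ x, F x = (ℙ {ω | X 0 ω ≤ x}).toReal)
    (hFcont : Continuous F)
    (hFmono : StrictMonoOn F (Set.Ici (0 : ℝ)))
    (hFinv1 : ∀ x ≥ (0 : ℝ), Finv F (F x) = x)
    (hFinv2 : ∀ s ∈ Set.Ioo (0 : ℝ) 1, F (Finv F s) = s)
    (hIntX : Integrable (X 0) ℙ)
    (hIntX2 : Integrable (fun ω => (X 0 ω) ^ 2) ℙ)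
    (hμpos : 0 < ∫ ω, X 0 ω) :
    TendstoInMeasure ℙ
      (fun (n : ℕ) (ω : Ω) =>
        Real.sqrt (n : ℝ) *
            ((∑ j ∈ Finset.range (povertyCount X Z n ω),
                ((n : ℝ) - j) * (sortedSample X n ω).getD j 0) / (n : ℝ) ^ 2 -
              ∫ ω', hFun F Z (X 0 ω')) -
          fep X n (hFun F Z) ω - residProc X F n (ellFun Z) ω)
      atTop (fun _ => 0) :=
  statement7_general X F Z hMeas hIndep hIdent hNonneg hF hFcont
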